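/- Let {X_t} be a stationary Markov chain on a finite set A = {1,...,n} with doublet frequency vector μ ∈ M_s(A²) satisfying μ_{ij} > 0 for all i, j. Then for EVERY subset Γ ⊆ M_s(A²) (not necessarily closed), limsup_{l→∞} (1/l) log Pr{ν(x_1^l) ∈ Γ} ≤ −inf_{ζ∈Γ} D_c(ζ‖μ). -/

import Mathlib

open Finset Filter

/-- Marginal of a doublet distribution. -/
def marg {n : ℕ} (ν : Fin n → Fin n → ℝ) : Fin n → ℝ := fun i => ∑ j, ν i j

def IsProb2 {n : ℕ} (ν : Fin n → Fin n → ℝ) : Prop :=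
  (∀ i j, 0 ≤ ν i j) ∧ ∑ i, ∑ j, ν i j = 1

def IsStat2 {n : ℕ} (ν : Fin n → Fin n → ℝ) : Prop :=
  ∀ i, ∑ j, ν i j = ∑ j, ν j i

/-- The set `M_s(A²)` of stationary probability distributions on `A²`. -/
def Ms2 (n : ℕ) : Set (Fin n → Fin n → ℝ) := {ν | IsProb2 ν ∧ IsStat2 ν}

/-- Relative entropy of doublet distributions. -/
noncomputable def DKL2 {n : ℕ} (ν μ : Fin n → Fin n → ℝ) : ℝ :=
  ∑ i, ∑ j, ν i j * Real.log (ν i j / μ i j)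

/-- Relative entropy of probability vectors. -/
noncomputable def DKL1 {n : ℕ} (p q : Fin n → ℝ) : ℝ := ∑ i, p i * Real.log (p i / q i)

/-- Conditional relative entropy `D_c(ν‖μ) = D(ν‖μ) − D(ν̄‖μ̄)`. -/
noncomputable def Dc {n : ℕ} (ν μ : Fin n → Fin n → ℝ) : ℝ :=
  DKL2 ν μ - DKL1 (marg ν) (marg μ)

/-- Cyclic empirical doublet measure of a sample path of length `l = m+1`. -/
noncomputable def emp2 {n m : ℕ} (x : Fin (m+1) → Fin n) : Fin n → Fin n → ℝ :=
  fun i j => (∑ t : Fin (m+1), if x t = i ∧ x (t+1) = j then (1:ℝ) else 0) / (m+1)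

/-- Markov chain law on paths of length `l = m+1`. -/
noncomputable def pathP {n : ℕ} (μ : Fin n → Fin n → ℝ) {m : ℕ} (x : Fin (m+1) → Fin n) : ℝ :=
  marg μ (x 0) * ∏ t : Fin m, (μ (x t.castSucc) (x t.succ) / marg μ (x t.castSucc))

open scoped Classical in
/-- `Pr{ν(x_1^l) ∈ Γ}`: probability of the set of sample paths of length `l = m+1`
whose cyclic empirical doublet measure lies in `Γ`. -/
noncomputable def prEvent {n : ℕ} (μ : Fin n → Fin n → ℝ) (m : ℕ)
    (Γ : Set (Fin n → Fin n → ℝ)) : ℝ :=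
  ∑ x : Fin (m+1) → Fin n, if emp2 x ∈ Γ then pathP μ x else 0

/-- Extended-real logarithm, `elog p = −∞` for `p ≤ 0`. -/
noncomputable def elog (p : ℝ) : EReal := if p ≤ 0 then ⊥ else ((Real.log p : ℝ) : EReal)

/-!
Method of types. For a path `x` of length `l` with empirical doublet measure `ν`, the probability
of `x` under `μ` is, up to a bounded boundary factor, the cyclic product
`∏ (μ i j / μ̄ i) ^ (l ν i j) = exp (-l D_c(ν‖μ)) · ∏ (ν i j / ν̄ i) ^ (l ν i j)`,
and the last product is at most `l` times the probability of `x` under the chain with doublet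
frequencies `ν`. That chain gives total mass at most one to the paths of type `ν`, and there are
at most `(l+1)^(n²)` types, so `Pr{ν ∈ Γ} ≤ C l^(n²+1) exp (-l inf_Γ D_c)` for every `Γ`.
-/

section Counting

variable {n m : ℕ}

def pairCount (x : Fin (m+1) → Fin n) (i j : Fin n) : ℕ :=
  #{t | x t = i ∧ x (t+1) = j}

lemma pairCount_le (x : Fin (m+1) → Fin n) (i j : Fin n) : pairCount x i j ≤ m + 1 :=
  (card_filter_le _ _).trans_eq (card_fin _)

lemma one_le_pairCount (x : Fin (m+1) → Fin n) (t : Fin (m+1)) :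
    1 ≤ pairCount x (x t) (x (t+1)) :=
  card_pos.2 ⟨t, by simp⟩

lemma sum_pairCount (x : Fin (m+1) → Fin n) : ∑ i, ∑ j, pairCount x i j = m + 1 := by
  have := card_eq_sum_card_fiberwise (f := fun t => (x t, x (t+1))) (s := univ) (t := univ)
    (fun _ _ => mem_coe.2 (mem_univ _))
  simpa [Fintype.sum_prod_type, pairCount, Prod.ext_iff] using this.symm

lemma prod_cyclic_eq_prod_pow_pairCount {M : Type*} [CommMonoid M] (F : Fin n → Fin n → M)
    (x : Fin (m+1) → Fin n) :
    ∏ t, F (x t) (x (t+1)) = ∏ i, ∏ j, F i j ^ pairCount x i j := by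
  rw [← prod_fiberwise univ (fun t => (x t, x (t+1))), Fintype.prod_prod_type]
  refine prod_congr rfl fun i _ => prod_congr rfl fun j _ => ?_
  rw [prod_congr rfl (g := fun _ => F i j) fun t ht => by
    obtain ⟨rfl, rfl⟩ := Prod.mk.inj (mem_filter.1 ht).2; rfl, prod_const]
  simp [pairCount, Prod.ext_iff]

lemma emp2_eq (x : Fin (m+1) → Fin n) (i j : Fin n) :
    emp2 x i j = pairCount x i j / (m+1) := by
  rw [emp2, sum_boole, pairCount]

end Counting

section Marginal

variable {n : ℕ} {q : Fin n → Fin n → ℝ}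

lemma marg_nonneg (hq : ∀ i j, 0 ≤ q i j) (i : Fin n) : 0 ≤ marg q i :=
  sum_nonneg fun j _ => hq i j

lemma le_marg (hq : ∀ i j, 0 ≤ q i j) (i j : Fin n) : q i j ≤ marg q i :=
  single_le_sum (f := q i) (fun j _ => hq i j) (mem_univ j)

lemma marg_pos (hq : ∀ i j, 0 < q i j) (i : Fin n) : 0 < marg q i :=
  (hq i i).trans_le (le_marg (fun i j => (hq i j).le) i i)

lemma marg_le_one (hq : ∀ i j, 0 ≤ q i j) (hq1 : ∑ i, ∑ j, q i j ≤ 1) (i : Fin n) :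
    marg q i ≤ 1 :=
  (single_le_sum (f := marg q) (fun i _ => marg_nonneg hq i) (mem_univ i)).trans hq1

-- Terms with `ν i j = 0` vanish on both sides since `0 * log _ = 0`.
lemma Dc_eq_sub (ν μ : Fin n → Fin n → ℝ) (hν : ∀ i j, 0 ≤ ν i j)
    (hμ : ∀ i j, 0 < μ i j) :
    Dc ν μ = ∑ i, ∑ j, ν i j * Real.log (ν i j / marg ν i)
      - ∑ i, ∑ j, ν i j * Real.log (μ i j / marg μ i) := by
  simp only [Dc, DKL2, DKL1, marg, sum_mul, ← sum_sub_distrib]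
  refine sum_congr rfl fun i _ => sum_congr rfl fun j _ => ?_
  rcases (hν i j).eq_or_lt with h0 | hpos
  · simp [← h0]
  · have hν' : 0 < ∑ k, ν i k := hpos.trans_le (le_marg hν i j)
    have hμ' : 0 < ∑ k, μ i k := marg_pos hμ i
    rw [Real.log_div hpos.ne' (hμ i j).ne', Real.log_div hν'.ne' hμ'.ne',
      Real.log_div hpos.ne' hν'.ne', Real.log_div (hμ i j).ne' hμ'.ne']
    ring

end Marginal

section Empirical

variable {n m : ℕ}

lemma emp2_nonneg (x : Fin (m+1) → Fin n) (i j : Fin n) : 0 ≤ emp2 x i j := by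
  rw [emp2_eq]; positivity

lemma sum_emp2 (x : Fin (m+1) → Fin n) : ∑ i, ∑ j, emp2 x i j = 1 := by
  simp_rw [emp2_eq, ← sum_div, ← Nat.cast_sum, sum_pairCount]
  push_cast
  exact div_self (by positivity)

lemma emp2_pos (x : Fin (m+1) → Fin n) {i j : Fin n} (h : pairCount x i j ≠ 0) :
    0 < emp2 x i j := by
  rw [emp2_eq]; positivity

lemma inv_le_emp2 (x : Fin (m+1) → Fin n) (t : Fin (m+1)) :
    ((m:ℝ)+1)⁻¹ ≤ emp2 x (x t) (x (t+1)) := by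
  rw [emp2_eq, inv_eq_one_div]
  gcongr
  exact_mod_cast one_le_pairCount x t

lemma card_image_emp2_le (s : Finset (Fin (m+1) → Fin n)) :
    #(s.image emp2) ≤ (m+2)^(n*n) := by
  let ofCounts : (Fin n → Fin n → Fin (m+2)) → Fin n → Fin n → ℝ :=
    fun c i j => (c i j : ℕ) / ((m:ℝ)+1)
  have hsub : s.image emp2 ⊆ univ.image ofCounts := by
    refine image_subset_iff.2 fun x _ => mem_image.2
      ⟨fun i j => ⟨pairCount x i j, Nat.lt_succ_of_le (pairCount_le x i j)⟩, mem_univ _, ?_⟩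
    funext i j
    exact (emp2_eq x i j).symm
  calc #(s.image emp2) ≤ #(univ.image ofCounts) := card_le_card hsub
    _ ≤ #(univ : Finset (Fin n → Fin n → Fin (m+2))) := card_image_le
    _ = (m+2)^(n*n) := by simp [pow_mul]

end Empirical

section PathWeight

variable {n m : ℕ}

-- `t + 1` wraps around in `Fin (m+1)`: this weighs the closed path `x 0 → ⋯ → x m → x 0`.
noncomputable def cyclicWeight (q : Fin n → Fin n → ℝ) (x : Fin (m+1) → Fin n) : ℝ :=
  ∏ t, q (x t) (x (t+1)) / marg q (x t)

lemma cyclicWeight_nonneg {q : Fin n → Fin n → ℝ} (hq : ∀ i j, 0 ≤ q i j)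
    (x : Fin (m+1) → Fin n) : 0 ≤ cyclicWeight q x :=
  prod_nonneg fun _ _ => div_nonneg (hq _ _) (marg_nonneg hq _)

lemma pathP_nonneg {q : Fin n → Fin n → ℝ} (hq : ∀ i j, 0 ≤ q i j)
    (x : Fin (m+1) → Fin n) : 0 ≤ pathP q x :=
  mul_nonneg (marg_nonneg hq _) (prod_nonneg fun _ _ => div_nonneg (hq _ _) (marg_nonneg hq _))

lemma pathP_mul_eq_marg_mul_cyclicWeight (q : Fin n → Fin n → ℝ) (x : Fin (m+1) → Fin n) :
    pathP q x * (q (x (Fin.last m)) (x 0) / marg q (x (Fin.last m)))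
      = marg q (x 0) * cyclicWeight q x := by
  have hwrap : (Fin.last m : Fin (m+1)) + 1 = 0 := Fin.last_add_one m
  have hstep (t : Fin m) : (t.castSucc : Fin (m+1)) + 1 = t.succ := Fin.coeSucc_eq_succ
  rw [cyclicWeight, Fin.prod_univ_castSucc, hwrap, pathP, mul_assoc]
  simp only [hstep]

lemma cyclicWeight_eq_exp {q : Fin n → Fin n → ℝ} (hq : ∀ i j, 0 ≤ q i j)
    (x : Fin (m+1) → Fin n) (hsupp : ∀ i j, pairCount x i j ≠ 0 → 0 < q i j) :
    cyclicWeight q x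
      = Real.exp ((m+1) * ∑ i, ∑ j, emp2 x i j * Real.log (q i j / marg q i)) := by
  rw [cyclicWeight, prod_cyclic_eq_prod_pow_pairCount (fun i j => q i j / marg q i),
    mul_sum, Real.exp_sum]
  refine prod_congr rfl fun i _ => ?_
  rw [mul_sum, Real.exp_sum]
  refine prod_congr rfl fun j _ => ?_
  rcases eq_or_ne (pairCount x i j) 0 with h0 | h
  · simp [h0, emp2_eq]
  · have hpos : 0 < q i j / marg q i :=
      div_pos (hsupp i j h) ((hsupp i j h).trans_le (le_marg hq i j))
    rw [emp2_eq, ← mul_assoc, mul_div_cancel₀ _ (by positivity), Real.exp_nat_mul,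
      Real.exp_log hpos]

end PathWeight

section OnePath

variable {n m : ℕ} {μ : Fin n → Fin n → ℝ}

lemma cyclicWeight_eq_exp_neg_Dc_mul (hμ : ∀ i j, 0 < μ i j) (x : Fin (m+1) → Fin n) :
    cyclicWeight μ x = Real.exp (-((m+1) * Dc (emp2 x) μ)) * cyclicWeight (emp2 x) x := by
  rw [cyclicWeight_eq_exp (fun i j => (hμ i j).le) x fun i j _ => hμ i j,
    cyclicWeight_eq_exp (emp2_nonneg x) x fun i j => emp2_pos x,
    Dc_eq_sub _ _ (emp2_nonneg x) hμ, ← Real.exp_add]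
  ring_nf

lemma pathP_le_mul_cyclicWeight (hμ : ∀ i j, 0 < μ i j) (hμ1 : ∑ i, ∑ j, μ i j ≤ 1)
    {K : ℝ} (hK : ∀ i j, marg μ i / μ i j ≤ K) (x : Fin (m+1) → Fin n) :
    pathP μ x ≤ K * cyclicWeight μ x := by
  set L := x (Fin.last m)
  have hμ0 : ∀ i j, 0 ≤ μ i j := fun i j => (hμ i j).le
  calc pathP μ x = marg μ (x 0) * cyclicWeight μ x * (marg μ L / μ L (x 0)) := by
        rw [← pathP_mul_eq_marg_mul_cyclicWeight, mul_assoc, div_mul_div_comm,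
          mul_comm (μ L (x 0)), div_self (mul_pos (marg_pos hμ L) (hμ L (x 0))).ne', mul_one]
    _ ≤ 1 * cyclicWeight μ x * K := by
      have := cyclicWeight_nonneg hμ0 x
      gcongr
      exacts [(div_pos (marg_pos hμ L) (hμ L (x 0))).le, marg_le_one hμ0 hμ1 _, hK _ _]
    _ = K * cyclicWeight μ x := by ring

lemma cyclicWeight_emp2_le (x : Fin (m+1) → Fin n) :
    cyclicWeight (emp2 x) x ≤ (m+1) * pathP (emp2 x) x := by
  set ν := emp2 x
  set L := x (Fin.last m)
  have hν := emp2_nonneg x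
  have hmarg : ((m:ℝ)+1)⁻¹ ≤ marg ν (x 0) := (inv_le_emp2 x 0).trans (le_marg hν _ _)
  have hclose : ν L (x 0) / marg ν L ≤ 1 :=
    div_le_one_of_le₀ (le_marg hν _ _) (marg_nonneg hν _)
  have key : ((m:ℝ)+1)⁻¹ * cyclicWeight ν x ≤ pathP ν x :=
    calc ((m:ℝ)+1)⁻¹ * cyclicWeight ν x ≤ marg ν (x 0) * cyclicWeight ν x :=
          mul_le_mul_of_nonneg_right hmarg (cyclicWeight_nonneg hν x)
      _ = pathP ν x * (ν L (x 0) / marg ν L) := (pathP_mul_eq_marg_mul_cyclicWeight ν x).symm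
      _ ≤ pathP ν x := mul_le_of_le_one_right (pathP_nonneg hν x) hclose
  rwa [inv_mul_le_iff₀ (by positivity)] at key

lemma pathP_le_exp_neg_Dc_mul (hμ : ∀ i j, 0 < μ i j) (hμ1 : ∑ i, ∑ j, μ i j ≤ 1)
    {K : ℝ} (hK : ∀ i j, marg μ i / μ i j ≤ K) (x : Fin (m+1) → Fin n) :
    pathP μ x ≤ K * (m+1) * Real.exp (-((m+1) * Dc (emp2 x) μ)) * pathP (emp2 x) x := by
  have hK0 : 0 ≤ K := (div_nonneg (marg_nonneg (fun i j => (hμ i j).le) _) (hμ _ _).le).trans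
    (hK (x 0) (x 0))
  calc pathP μ x ≤ K * cyclicWeight μ x := pathP_le_mul_cyclicWeight hμ hμ1 hK x
    _ = K * Real.exp (-((m+1) * Dc (emp2 x) μ)) * cyclicWeight (emp2 x) x := by
      rw [cyclicWeight_eq_exp_neg_Dc_mul hμ, mul_assoc]
    _ ≤ K * Real.exp (-((m+1) * Dc (emp2 x) μ)) * ((m+1) * pathP (emp2 x) x) := by
      gcongr
      exact cyclicWeight_emp2_le x
    _ = K * (m+1) * Real.exp (-((m+1) * Dc (emp2 x) μ)) * pathP (emp2 x) x := by ring

end OnePath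

section SubProbability

variable {n : ℕ} {q : Fin n → Fin n → ℝ}

lemma pathP_snoc {m : ℕ} (y : Fin (m+1) → Fin n) (a : Fin n) :
    pathP q (Fin.snoc y a : Fin (m+2) → Fin n)
      = pathP q y * (q (y (Fin.last m)) a / marg q (y (Fin.last m))) := by
  rw [pathP, pathP, Fin.prod_univ_castSucc, Fin.succ_last, Fin.snoc_last, Fin.snoc_castSucc,
    mul_assoc]
  congr 2
  refine prod_congr rfl fun t _ => ?_
  rw [Fin.succ_castSucc, Fin.snoc_castSucc, Fin.snoc_castSucc]

lemma sum_pathP_le_one (hq : ∀ i j, 0 ≤ q i j) (hq1 : ∑ i, ∑ j, q i j ≤ 1) (m : ℕ) :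
    ∑ x : Fin (m+1) → Fin n, pathP q x ≤ 1 := by
  induction m with
  | zero =>
    rw [Fintype.sum_equiv (Equiv.funUnique (Fin 1) (Fin n)) _ (marg q) fun x => by simp [pathP]]
    exact hq1
  | succ m ih =>
    rw [← (Fin.snocEquiv fun _ => Fin n).sum_comp, Fintype.sum_prod_type, sum_comm]
    refine le_trans (sum_le_sum fun y _ => ?_) ih
    have hsnoc (a : Fin n) : (Fin.snocEquiv fun _ => Fin n) (a, y) = Fin.snoc y a :=
      funext (Fin.snocEquiv_apply _ _)
    simp only [hsnoc, pathP_snoc, ← mul_sum, ← sum_div]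
    exact mul_le_of_le_one_right (pathP_nonneg hq y) (div_self_le_one _)

end SubProbability

lemma Finset.sum_le_card_image_of_sum_le_one {α β : Type*} [DecidableEq β] (s : Finset α)
    (f : α → β) (w : β → α → ℝ) (hw : ∀ a ∈ s, ∀ a', 0 ≤ w (f a) a')
    (h1 : ∀ a ∈ s, ∑ a' ∈ s, w (f a) a' ≤ 1) :
    ∑ a ∈ s, w (f a) a ≤ #(s.image f) := by
  rw [← sum_fiberwise_of_maps_to fun a ha => mem_image_of_mem f ha, card_eq_sum_ones,
    Nat.cast_sum]
  refine sum_le_sum fun b hb => ?_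
  obtain ⟨a₀, ha₀, rfl⟩ := mem_image.1 hb
  calc ∑ a ∈ s with f a = f a₀, w (f a) a = ∑ a ∈ s with f a = f a₀, w (f a₀) a :=
        sum_congr rfl fun a ha => by rw [(mem_filter.1 ha).2]
    _ ≤ ∑ a ∈ s, w (f a₀) a := sum_le_sum_of_subset_of_nonneg (filter_subset _ _)
        fun a _ _ => hw a₀ ha₀ a
    _ ≤ _ := by simpa using h1 a₀ ha₀

section Bound

variable {n : ℕ} {μ : Fin n → Fin n → ℝ}

lemma prEvent_le (hμ : ∀ i j, 0 < μ i j) (hμ1 : ∑ i, ∑ j, μ i j ≤ 1) {K : ℝ}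
    (hK0 : 0 ≤ K) (hK : ∀ i j, marg μ i / μ i j ≤ K) {Γ : Set (Fin n → Fin n → ℝ)}
    {s : ℝ} (hs : ∀ ζ ∈ Γ, s ≤ Dc ζ μ) (m : ℕ) :
    prEvent μ m Γ ≤ K * 2^(n*n) * ((m:ℝ)+1)^(n*n+1) * Real.exp (-(((m:ℝ)+1) * s)) := by
  classical
  set S : Finset (Fin (m+1) → Fin n) := {x | emp2 x ∈ Γ}
  set c := K * ((m:ℝ)+1) * Real.exp (-(((m:ℝ)+1) * s)) with hc
  have hpath (x) (hx : x ∈ S) : pathP μ x ≤ c * pathP (emp2 x) x := by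
    refine (pathP_le_exp_neg_Dc_mul hμ hμ1 hK x).trans ?_
    rw [hc]
    gcongr
    · exact pathP_nonneg (emp2_nonneg x) x
    · exact hs _ (mem_filter.1 hx).2
  have htypes : ∑ x ∈ S, pathP (emp2 x) x ≤ (m+2)^(n*n) := by
    refine (sum_le_card_image_of_sum_le_one S emp2 (fun ν x => pathP ν x)
      (fun x _ => pathP_nonneg (emp2_nonneg x)) fun x _ => ?_).trans ?_
    · exact (sum_le_sum_of_subset_of_nonneg (subset_univ S) fun y _ _ =>
        pathP_nonneg (emp2_nonneg x) y).trans
        (sum_pathP_le_one (emp2_nonneg x) (sum_emp2 x).le m)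
    · exact_mod_cast card_image_emp2_le S
  calc prEvent μ m Γ = ∑ x ∈ S, pathP μ x := by
        rw [prEvent, sum_ite, sum_const_zero, add_zero]
    _ ≤ ∑ x ∈ S, c * pathP (emp2 x) x := sum_le_sum hpath
    _ ≤ c * (m+2)^(n*n) := by rw [← mul_sum]; gcongr
    _ ≤ c * (2 * ((m:ℝ)+1))^(n*n) := by gcongr; linarith
    _ = K * 2^(n*n) * ((m:ℝ)+1)^(n*n+1) * Real.exp (-(((m:ℝ)+1) * s)) := by
        rw [hc, mul_pow]; ring

end Bound

section Asymptotics

open Topology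

lemma tendsto_inv_mul_log_mul_pow_mul_exp {C : ℝ} (hC : 0 < C) (k : ℕ) (s : ℝ) :
    Tendsto (fun l : ℝ => l⁻¹ * Real.log (C * l^k * Real.exp (-(l * s)))) atTop
      (𝓝 (-s)) := by
  have heq : ∀ᶠ l : ℝ in atTop,
      Real.log C * l⁻¹ + k * (Real.log l / l) - s
        = l⁻¹ * Real.log (C * l^k * Real.exp (-(l * s))) := by
    filter_upwards [eventually_gt_atTop 0] with l hl
    rw [Real.log_mul (by positivity) (Real.exp_ne_zero _), Real.log_mul hC.ne' (by positivity),
      Real.log_pow, Real.log_exp]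
    field_simp
    ring
  refine Tendsto.congr' heq ?_
  have hlog := Real.isLittleO_log_id_atTop.tendsto_div_nhds_zero
  simpa using
    ((tendsto_inv_atTop_zero.const_mul (Real.log C)).add (hlog.const_mul (k:ℝ))).sub_const s

lemma elog_le_coe_log {p b : ℝ} (h : p ≤ b) : elog p ≤ (Real.log b : EReal) := by
  unfold elog
  split_ifs with hp
  · exact bot_le
  · exact EReal.coe_le_coe_iff.2 (Real.log_le_log (not_le.1 hp) h)

lemma limsup_inv_mul_elog_le {p : ℕ → ℝ} {C : ℝ} (hC : 0 < C) (k : ℕ) (s : ℝ)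
    (hp : ∀ m, p m ≤ C * ((m:ℝ)+1)^k * Real.exp (-(((m:ℝ)+1) * s))) :
    limsup (fun m : ℕ => ((((m:ℝ)+1)⁻¹ : ℝ) : EReal) * elog (p m)) atTop
      ≤ ((-s : ℝ) : EReal) := by
  let rate : ℝ → ℝ := fun l => l⁻¹ * Real.log (C * l^k * Real.exp (-(l * s)))
  have hterm (m : ℕ) :
      ((((m:ℝ)+1)⁻¹ : ℝ) : EReal) * elog (p m) ≤ (rate (m+1) : EReal) := by
    rw [EReal.coe_mul]
    exact mul_le_mul_of_nonneg_left (elog_le_coe_log (hp m))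
      (EReal.coe_nonneg.2 (by positivity))
  have hlim : Tendsto (fun m : ℕ => rate (m+1)) atTop (𝓝 (-s)) :=
    (tendsto_inv_mul_log_mul_pow_mul_exp hC k s).comp
      (tendsto_atTop_add_const_right _ 1 tendsto_natCast_atTop_atTop)
  calc limsup (fun m : ℕ => ((((m:ℝ)+1)⁻¹ : ℝ) : EReal) * elog (p m)) atTop
      ≤ limsup (fun m : ℕ => (rate (m+1) : EReal)) atTop := limsup_le_limsup (.of_forall hterm)
    _ = ((-s : ℝ) : EReal) := (EReal.tendsto_coe.2 hlim).limsup_eq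

end Asymptotics

theorem stmt10_general {n : ℕ} (μ : Fin n → Fin n → ℝ)
    (hμ : μ ∈ Ms2 n) (hpos : ∀ i j, 0 < μ i j)
    (Γ : Set (Fin n → Fin n → ℝ)) :
    Filter.limsup
      (fun m : ℕ => ((((m:ℝ)+1)⁻¹ : ℝ) : EReal) * elog (prEvent μ m Γ))
      Filter.atTop
    ≤ -(⨅ ζ ∈ Γ, ((Dc ζ μ : ℝ) : EReal)) := by
  have hμ1 : ∑ i, ∑ j, μ i j = 1 := hμ.1.2
  obtain ⟨i₀⟩ : Nonempty (Fin n) := by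
    by_contra h
    simp [not_nonempty_iff.1 h] at hμ1
  obtain ⟨K, hK⟩ :=
    (Set.finite_range fun p : Fin n × Fin n => marg μ p.1 / μ p.1 p.2).bddAbove
  have hKij (i j : Fin n) : marg μ i / μ i j ≤ K := hK ⟨(i, j), rfl⟩
  have hK0 : 0 < K := (div_pos (marg_pos hpos i₀) (hpos i₀ i₀)).trans_le (hKij i₀ i₀)
  refine EReal.le_of_forall_lt_iff_le.1 fun z hz => ?_
  have hs (ζ) (hζ : ζ ∈ Γ) : -z ≤ Dc ζ μ := by
    have : ((-z : ℝ) : EReal) < Dc ζ μ := (EReal.neg_lt_comm.1 hz).trans_le (biInf_le _ hζ)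
    exact_mod_cast this.le
  simpa using limsup_inv_mul_elog_le (by positivity) _ _ (prEvent_le hpos hμ1.le hK0.le hKij hs)

/-- For a stationary Markov chain with strictly positive doublet
frequency vector `μ ∈ M_s(A²)`, for EVERY subset `Γ ⊆ M_s(A²)` (not necessarily
closed), `limsup_{l→∞} (1/l) log Pr{ν(x_1^l) ∈ Γ} ≤ −inf_{ζ∈Γ} D_c(ζ‖μ)`. -/
theorem stmt10 {n : ℕ} (μ : Fin n → Fin n → ℝ)
    (hμ : μ ∈ Ms2 n) (hpos : ∀ i j, 0 < μ i j)
    (Γ : Set (Fin n → Fin n → ℝ)) (hΓ : Γ ⊆ Ms2 n) :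
    Filter.limsup
      (fun m : ℕ => ((((m:ℝ)+1)⁻¹ : ℝ) : EReal) * elog (prEvent μ m Γ))
      Filter.atTop
    ≤ -(⨅ ζ ∈ Γ, ((Dc ζ μ : ℝ) : EReal)) :=
  stmt10_general μ hμ hpos Γ
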